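/- Suppose: (i) there is L > 0 such that for every t ∈ [0,1] and every dyadic step size h', the map x ↦ s(x, t, h') is L-Lipschitz; (ii) there is ε_SC ≥ 0 such that for every dyadic step size h' ≤ 1/2 and every t ∈ {0, h', 2h', …, 1 − 2h'}, ‖F^{(2h')}(z_t, t, t + 2h') − F^{(h')}(z_t, t, t + 2h')‖_{L²} ≤ 2h'·ε_SC; (iii) there is ε ≥ 0 such that for every t ∈ {0, h₀, 2h₀, …, 1 − h₀}, ‖z_t + h₀·s(z_t, t, h₀) − z_{t+h₀}‖_{L²} ≤ h₀·ε. Then for every dyadic step size h = 2ⁿ·h₀ and every t ∈ {0, h, 2h, …, 1 − h}, the single shortcut step of size h satisfies ‖z_t + h·s(z_t, t, h) − z_{t+h}‖_{L²} ≤ h·exp(L·h/2)·(ε + n·ε_SC). -/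

import Mathlib

open MeasureTheory Set

/-- The `L²` norm of a random vector: `‖X‖_{L²} = (E[‖X‖²])^{1/2}`. -/
noncomputable def L2norm {Ω : Type*} [MeasurableSpace Ω] (P : Measure Ω)
    {d : ℕ} (X : Ω → EuclideanSpace ℝ (Fin d)) : ℝ :=
  Real.sqrt (∫ ω, ‖X ω‖ ^ 2 ∂P)

/-- `eulerIter s h t n x` is `F^{(h)}(x, t, t + n·h)`: the result of iterating the Euler
steps `x ↦ x + h • s x τ h` for `τ = t, t + h, …, t + (n−1)h` starting from `x`. -/
noncomputable def eulerIter {d : ℕ}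
    (s : EuclideanSpace ℝ (Fin d) → ℝ → ℝ → EuclideanSpace ℝ (Fin d)) (h : ℝ) :
    ℝ → ℕ → EuclideanSpace ℝ (Fin d) → EuclideanSpace ℝ (Fin d)
  | _, 0, x => x
  | t, n + 1, x => eulerIter s h (t + h) n (x + h • s x t h)

section helpers
variable {Ω : Type*} [MeasurableSpace Ω] {P : Measure Ω} {d : ℕ}

lemma L2norm_eq_toReal (X : Ω → EuclideanSpace ℝ (Fin d)) (hX : AEStronglyMeasurable X P) :
    L2norm P X = (eLpNorm X 2 P).toReal := by
  rw [L2norm, eLpNorm_eq_lintegral_rpow_enorm_toReal (by norm_num) (by norm_num)]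
  rw [integral_eq_lintegral_of_nonneg_ae (Filter.Eventually.of_forall fun ω => by positivity)
    (by exact hX.norm.pow 2)]
  rw [Real.sqrt_eq_rpow, ← ENNReal.toReal_rpow]
  norm_num

lemma L2norm_nonneg (X : Ω → EuclideanSpace ℝ (Fin d)) : 0 ≤ L2norm P X :=
  Real.sqrt_nonneg _

lemma l2_tri {X Y : Ω → EuclideanSpace ℝ (Fin d)} (hX : MemLp X 2 P) (hY : MemLp Y 2 P) :
    L2norm P (fun ω => X ω + Y ω) ≤ L2norm P X + L2norm P Y := by
  rw [L2norm_eq_toReal _ (by exact hX.aestronglyMeasurable.add hY.aestronglyMeasurable),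
    L2norm_eq_toReal _ hX.aestronglyMeasurable, L2norm_eq_toReal _ hY.aestronglyMeasurable]
  rw [← ENNReal.toReal_add hX.eLpNorm_ne_top hY.eLpNorm_ne_top]
  exact ENNReal.toReal_mono (by simp [hX.eLpNorm_ne_top, hY.eLpNorm_ne_top, ENNReal.add_ne_top])
    (eLpNorm_add_le hX.aestronglyMeasurable hY.aestronglyMeasurable (by norm_num))

lemma l2_mono_mul {X Y : Ω → EuclideanSpace ℝ (Fin d)} {C : ℝ} (hC : 0 ≤ C)
    (hX : AEStronglyMeasurable X P) (hY : MemLp Y 2 P)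
    (hb : ∀ ω, ‖X ω‖ ≤ C * ‖Y ω‖) : L2norm P X ≤ C * L2norm P Y := by
  have hCY : MemLp (fun ω => C • Y ω) 2 P := hY.const_smul C
  have h1 : eLpNorm X 2 P ≤ eLpNorm (fun ω => C • Y ω) 2 P :=
    eLpNorm_mono_ae (Filter.Eventually.of_forall fun ω => by
      simpa [norm_smul, abs_of_nonneg hC] using hb ω)
  rw [L2norm_eq_toReal _ hX, L2norm_eq_toReal _ hY.aestronglyMeasurable]
  calc (eLpNorm X 2 P).toReal ≤ (eLpNorm (fun ω => C • Y ω) 2 P).toReal :=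
        ENNReal.toReal_mono hCY.eLpNorm_ne_top h1
    _ = C * (eLpNorm Y 2 P).toReal := by
        rw [show (fun ω => C • Y ω) = C • Y from rfl, eLpNorm_const_smul,
          ENNReal.toReal_mul, toReal_enorm]
        congr 1
        simp [Real.norm_eq_abs, abs_of_nonneg hC]

lemma l2_eq_of_ae {X Y : Ω → EuclideanSpace ℝ (Fin d)} (h : ∀ ω, X ω = Y ω) :
    L2norm P X = L2norm P Y := by
  simp only [L2norm]; congr 1
  exact integral_congr_ae (Filter.Eventually.of_forall fun ω => by dsimp only; rw [h ω])

lemma l2_tri3 {X Y W G : Ω → EuclideanSpace ℝ (Fin d)}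
    (hG : ∀ ω, G ω = X ω + (Y ω + W ω))
    (hX : MemLp X 2 P) (hY : MemLp Y 2 P) (hW : MemLp W 2 P)
    {a b c : ℝ} (ha : L2norm P X ≤ a) (hb : L2norm P Y ≤ b) (hc : L2norm P W ≤ c) :
    L2norm P G ≤ a + (b + c) := by
  calc L2norm P G = L2norm P (fun ω => X ω + (Y ω + W ω)) := l2_eq_of_ae hG
    _ ≤ L2norm P X + L2norm P (fun ω => Y ω + W ω) := l2_tri hX (by exact hY.add hW)
    _ ≤ L2norm P X + (L2norm P Y + L2norm P W) := by
        have := l2_tri hY hW; linarith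
    _ ≤ a + (b + c) := by linarith

end helpers

/-- Lemma: single-step error with step size `h`: a single shortcut step of
dyadic size `h = 2^n h₀` satisfies
`‖z_t + h s(z_t,t,h) − z_{t+h}‖_{L²} ≤ h e^{Lh/2} (ε + n ε_SC)`. -/
theorem stmt5 {d : ℕ} (hd : 1 ≤ d) {Ω : Type*} [MeasurableSpace Ω]
    (P : Measure Ω) [IsProbabilityMeasure P]
    (K : ℕ) (hK : 1 ≤ K) (h₀ : ℝ) (hh₀ : h₀ = 1 / 2 ^ K)
    (v : ℝ → EuclideanSpace ℝ (Fin d) → EuclideanSpace ℝ (Fin d))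
    (z : ℝ → Ω → EuclideanSpace ℝ (Fin d))
    (hzode : ∀ ω, ∀ t ∈ Icc (0 : ℝ) 1,
      HasDerivWithinAt (fun τ => z τ ω) (v t (z t ω)) (Icc (0 : ℝ) 1) t)
    (hzmem : ∀ t ∈ Icc (0 : ℝ) 1, MemLp (z t) 2 P)
    (s : EuclideanSpace ℝ (Fin d) → ℝ → ℝ → EuclideanSpace ℝ (Fin d))
    (L : ℝ) (hL : 0 < L)
    (hsLip : ∀ t ∈ Icc (0 : ℝ) 1, ∀ k ≤ K, ∀ x y : EuclideanSpace ℝ (Fin d),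
      ‖s x t (2 ^ k * h₀) - s y t (2 ^ k * h₀)‖ ≤ L * ‖x - y‖)
    (ε_SC : ℝ) (hεSC : 0 ≤ ε_SC)
    (hSC : ∀ k : ℕ, k + 1 ≤ K → ∀ i : ℕ, (i + 2) * 2 ^ k ≤ 2 ^ K →
      L2norm P (fun ω =>
        eulerIter s (2 * (2 ^ k * h₀)) (i * (2 ^ k * h₀)) 1 (z (i * (2 ^ k * h₀)) ω)
          - eulerIter s (2 ^ k * h₀) (i * (2 ^ k * h₀)) 2 (z (i * (2 ^ k * h₀)) ω))
        ≤ 2 * (2 ^ k * h₀) * ε_SC)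
    (ε : ℝ) (hε : 0 ≤ ε)
    (hbase : ∀ i : ℕ, i < 2 ^ K →
      L2norm P (fun ω =>
        z (i * h₀) ω + h₀ • s (z (i * h₀) ω) (i * h₀) h₀ - z ((i + 1 : ℕ) * h₀) ω)
        ≤ h₀ * ε) :
    ∀ n ≤ K, ∀ i : ℕ, (i + 1) * 2 ^ n ≤ 2 ^ K →
      L2norm P (fun ω =>
        z (i * (2 ^ n * h₀)) ω
          + (2 ^ n * h₀) • s (z (i * (2 ^ n * h₀)) ω) (i * (2 ^ n * h₀)) (2 ^ n * h₀)
          - z ((i + 1 : ℕ) * (2 ^ n * h₀)) ω)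
        ≤ (2 ^ n * h₀) * Real.exp (L * (2 ^ n * h₀) / 2) * (ε + n * ε_SC) := by
  have h₀pos : 0 < h₀ := by rw [hh₀]; positivity
  have hIcc : ∀ (m k : ℕ), m * 2 ^ k ≤ 2 ^ K → ((m : ℝ) * (2 ^ k * h₀)) ∈ Icc (0 : ℝ) 1 := by
    intro m k hmk
    constructor
    · positivity
    · have hc : ((m : ℝ) * 2 ^ k) ≤ 2 ^ K := by exact_mod_cast hmk
      calc (m : ℝ) * (2 ^ k * h₀) = ((m : ℝ) * 2 ^ k) * h₀ := by ring
        _ ≤ 2 ^ K * h₀ := mul_le_mul_of_nonneg_right hc h₀pos.le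
        _ = 1 := by rw [hh₀]; field_simp
  have hzmem' : ∀ (m k : ℕ), m * 2 ^ k ≤ 2 ^ K → MemLp (z ((m : ℝ) * (2 ^ k * h₀))) 2 P :=
    fun m k hmk => hzmem _ (hIcc m k hmk)
  have hLip : ∀ k ≤ K, ∀ t ∈ Icc (0 : ℝ) 1,
      LipschitzWith L.toNNReal (fun x => s x t (2 ^ k * h₀)) := by
    intro k hk t ht
    refine LipschitzWith.of_dist_le_mul fun x y => ?_
    rw [dist_eq_norm, dist_eq_norm, Real.coe_toNNReal _ hL.le]
    exact hsLip t ht k hk x y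
  have hsmem : ∀ (X : Ω → EuclideanSpace ℝ (Fin d)), MemLp X 2 P → ∀ k ≤ K,
      ∀ t ∈ Icc (0 : ℝ) 1, MemLp (fun ω => s (X ω) t (2 ^ k * h₀)) 2 P := by
    intro X hX k hk t ht
    have lip := hLip k hk t ht
    have lip2 : LipschitzWith L.toNNReal
        (fun x => s x t (2 ^ k * h₀) - s 0 t (2 ^ k * h₀)) := by
      refine LipschitzWith.of_dist_le_mul fun x y => ?_
      rw [dist_eq_norm, dist_eq_norm, Real.coe_toNNReal _ hL.le]
      simpa [sub_sub_sub_cancel_right] using hsLip t ht k hk x y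
    have h1 : MemLp (fun ω => s (X ω) t (2 ^ k * h₀) - s 0 t (2 ^ k * h₀)) 2 P :=
      lip2.comp_memLp (by simp) hX
    have h2 : MemLp (fun _ : Ω => s 0 t (2 ^ k * h₀)) 2 P := memLp_const _
    have h3 := h1.add h2
    exact h3.ae_eq (Filter.Eventually.of_forall fun ω => by simp)
  intro n
  induction n with
  | zero =>
    intro _ i hi
    have hi' : i < 2 ^ K := lt_of_lt_of_le (Nat.lt_succ_self i) (by simpa using hi)
    simp only [pow_zero, one_mul, Nat.cast_zero, zero_mul, add_zero]
    calc L2norm P (fun ω =>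
          z (i * h₀) ω + h₀ • s (z (i * h₀) ω) (i * h₀) h₀ - z ((i + 1 : ℕ) * h₀) ω)
        ≤ h₀ * ε := hbase i hi'
      _ ≤ h₀ * Real.exp (L * h₀ / 2) * ε := by
          have h1 : (1:ℝ) ≤ Real.exp (L * h₀ / 2) :=
            Real.one_le_exp (by positivity)
          nlinarith [mul_nonneg (mul_nonneg h₀pos.le (sub_nonneg.mpr h1)) hε]
  | succ n IH =>
    intro hn i hi
    have hn' : n ≤ K := Nat.le_of_succ_le hn
    have h'pos : 0 < (2:ℝ) ^ n * h₀ := by positivity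
    -- index bounds
    have hi2 : (2 * i + 2) * 2 ^ n ≤ 2 ^ K := by
      calc (2 * i + 2) * 2 ^ n = (i + 1) * 2 ^ (n + 1) := by ring
        _ ≤ 2 ^ K := hi
    have hi1 : (2 * i + 1) * 2 ^ n ≤ 2 ^ K :=
      le_trans (Nat.mul_le_mul_right _ (by omega)) hi2
    have hi0 : (2 * i) * 2 ^ n ≤ 2 ^ K :=
      le_trans (Nat.mul_le_mul_right _ (by omega)) hi2
    -- real times
    have e2 : (2:ℝ) ^ (n + 1) * h₀ = 2 * (2 ^ n * h₀) := by ring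
    have ht : (i : ℝ) * (2 ^ (n + 1) * h₀) = ((2 * i : ℕ) : ℝ) * (2 ^ n * h₀) := by
      push_cast; ring
    have ht2 : (((i + 1 : ℕ)) : ℝ) * (2 ^ (n + 1) * h₀)
        = ((2 * i + 1 + 1 : ℕ) : ℝ) * (2 ^ n * h₀) := by push_cast; ring
    have ht1 : ((2 * i : ℕ) : ℝ) * (2 ^ n * h₀) + 2 ^ n * h₀
        = ((2 * i + 1 : ℕ) : ℝ) * (2 ^ n * h₀) := by push_cast; ring
    set T : ℝ := ((2 * i : ℕ) : ℝ) * (2 ^ n * h₀) with hT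
    set T1 : ℝ := ((2 * i + 1 : ℕ) : ℝ) * (2 ^ n * h₀) with hT1
    set T2 : ℝ := ((2 * i + 1 + 1 : ℕ) : ℝ) * (2 ^ n * h₀) with hT2
    rw [ht, ht2, e2]
    -- membership
    have mIccT : T ∈ Icc (0:ℝ) 1 := hIcc (2 * i) n hi0
    have mIccT1 : T1 ∈ Icc (0:ℝ) 1 := hIcc (2 * i + 1) n hi1
    -- MemLp facts
    have mz0 : MemLp (z T) 2 P := hzmem' (2 * i) n hi0
    have mz1 : MemLp (z T1) 2 P := hzmem' (2 * i + 1) n hi1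
    have mz2 : MemLp (z T2) 2 P := by
      have := hzmem' (2 * i + 2) n hi2
      have hcast : ((2 * i + 2 : ℕ) : ℝ) * (2 ^ n * h₀) = T2 := by rw [hT2]
      rwa [hcast] at this
    have ms0 : MemLp (fun ω => s (z T ω) T (2 ^ n * h₀)) 2 P :=
      hsmem (z T) mz0 n hn' T mIccT
    have msH : MemLp (fun ω => s (z T ω) T (2 * (2 ^ n * h₀))) 2 P := by
      have := hsmem (z T) mz0 (n + 1) hn T mIccT
      rwa [e2] at this
    have ms1 : MemLp (fun ω => s (z T1 ω) T1 (2 ^ n * h₀)) 2 P :=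
      hsmem (z T1) mz1 n hn' T1 mIccT1
    have mx1 : MemLp (fun ω => z T ω + (2 ^ n * h₀) • s (z T ω) T (2 ^ n * h₀)) 2 P := by
      exact mz0.add (ms0.const_smul (2 ^ n * h₀))
    have msx1 : MemLp (fun ω =>
        s (z T ω + (2 ^ n * h₀) • s (z T ω) T (2 ^ n * h₀)) T1 (2 ^ n * h₀)) 2 P :=
      hsmem _ mx1 n hn' T1 mIccT1
    -- Euler expansion
    have eE1 : ∀ x, eulerIter s (2 * (2 ^ n * h₀)) T 1 x
        = x + (2 * (2 ^ n * h₀)) • s x T (2 * (2 ^ n * h₀)) := fun x => rfl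
    have eE2 : ∀ x, eulerIter s (2 ^ n * h₀) T 2 x
        = (x + (2 ^ n * h₀) • s x T (2 ^ n * h₀))
          + (2 ^ n * h₀) • s (x + (2 ^ n * h₀) • s x T (2 ^ n * h₀)) T1 (2 ^ n * h₀) :=
      fun x => by
        have e : eulerIter s (2 ^ n * h₀) T 2 x
            = (x + (2 ^ n * h₀) • s x T (2 ^ n * h₀))
              + (2 ^ n * h₀) • s (x + (2 ^ n * h₀) • s x T (2 ^ n * h₀))
                  (T + 2 ^ n * h₀) (2 ^ n * h₀) := rfl
        rw [e, ht1]
    -- MemLp of the three pieces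
    have mG1 : MemLp (fun ω => eulerIter s (2 * (2 ^ n * h₀)) T 1 (z T ω)
        - eulerIter s (2 ^ n * h₀) T 2 (z T ω)) 2 P := by
      have : MemLp (fun ω =>
          (z T ω + (2 * (2 ^ n * h₀)) • s (z T ω) T (2 * (2 ^ n * h₀)))
          - ((z T ω + (2 ^ n * h₀) • s (z T ω) T (2 ^ n * h₀))
            + (2 ^ n * h₀) • s (z T ω + (2 ^ n * h₀) • s (z T ω) T (2 ^ n * h₀))
                T1 (2 ^ n * h₀))) 2 P := by
        exact ((mz0.add (msH.const_smul (2 * (2 ^ n * h₀)))).sub (mx1.add (msx1.const_smul (2 ^ n * h₀))))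
      exact this.ae_eq (Filter.Eventually.of_forall fun ω => by
        dsimp only; rw [eE1, eE2])
    have mG2 : MemLp (fun ω => eulerIter s (2 ^ n * h₀) T 2 (z T ω)
        - (z T1 ω + (2 ^ n * h₀) • s (z T1 ω) T1 (2 ^ n * h₀))) 2 P := by
      have : MemLp (fun ω =>
          ((z T ω + (2 ^ n * h₀) • s (z T ω) T (2 ^ n * h₀))
            + (2 ^ n * h₀) • s (z T ω + (2 ^ n * h₀) • s (z T ω) T (2 ^ n * h₀))
                T1 (2 ^ n * h₀))
          - (z T1 ω + (2 ^ n * h₀) • s (z T1 ω) T1 (2 ^ n * h₀))) 2 P := by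
        exact ((mx1.add (msx1.const_smul (2 ^ n * h₀))).sub (mz1.add (ms1.const_smul (2 ^ n * h₀))))
      exact this.ae_eq (Filter.Eventually.of_forall fun ω => by
        dsimp only; rw [eE2])
    have mG3 : MemLp (fun ω =>
        z T1 ω + (2 ^ n * h₀) • s (z T1 ω) T1 (2 ^ n * h₀) - z T2 ω) 2 P := by
      exact (mz1.add (ms1.const_smul (2 ^ n * h₀))).sub mz2
    have mD : MemLp (fun ω =>
        z T ω + (2 ^ n * h₀) • s (z T ω) T (2 ^ n * h₀) - z T1 ω) 2 P := by
      exact mx1.sub mz1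
    -- bounds on pieces
    have bG1 : L2norm P (fun ω => eulerIter s (2 * (2 ^ n * h₀)) T 1 (z T ω)
        - eulerIter s (2 ^ n * h₀) T 2 (z T ω)) ≤ 2 * (2 ^ n * h₀) * ε_SC :=
      hSC n hn (2 * i) hi2
    have bD : L2norm P (fun ω =>
        z T ω + (2 ^ n * h₀) • s (z T ω) T (2 ^ n * h₀) - z T1 ω)
        ≤ (2 ^ n * h₀) * Real.exp (L * (2 ^ n * h₀) / 2) * (ε + n * ε_SC) :=
      IH hn' (2 * i) hi1
    have bG3 : L2norm P (fun ω =>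
        z T1 ω + (2 ^ n * h₀) • s (z T1 ω) T1 (2 ^ n * h₀) - z T2 ω)
        ≤ (2 ^ n * h₀) * Real.exp (L * (2 ^ n * h₀) / 2) * (ε + n * ε_SC) := by
      have := IH hn' (2 * i + 1) (by
        calc (2 * i + 1 + 1) * 2 ^ n = (2 * i + 2) * 2 ^ n := by ring
          _ ≤ 2 ^ K := hi2)
      exact this
    have bG2 : L2norm P (fun ω => eulerIter s (2 ^ n * h₀) T 2 (z T ω)
        - (z T1 ω + (2 ^ n * h₀) • s (z T1 ω) T1 (2 ^ n * h₀)))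
        ≤ (1 + L * (2 ^ n * h₀)) *
          ((2 ^ n * h₀) * Real.exp (L * (2 ^ n * h₀) / 2) * (ε + n * ε_SC)) := by
      have hmono : L2norm P (fun ω => eulerIter s (2 ^ n * h₀) T 2 (z T ω)
          - (z T1 ω + (2 ^ n * h₀) • s (z T1 ω) T1 (2 ^ n * h₀)))
          ≤ (1 + L * (2 ^ n * h₀)) * L2norm P (fun ω =>
            z T ω + (2 ^ n * h₀) • s (z T ω) T (2 ^ n * h₀) - z T1 ω) := by
        refine l2_mono_mul (by positivity) mG2.aestronglyMeasurable mD fun ω => ?_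
        rw [eE2]
        have key : (z T ω + (2 ^ n * h₀) • s (z T ω) T (2 ^ n * h₀))
            + (2 ^ n * h₀) • s (z T ω + (2 ^ n * h₀) • s (z T ω) T (2 ^ n * h₀))
                T1 (2 ^ n * h₀)
            - (z T1 ω + (2 ^ n * h₀) • s (z T1 ω) T1 (2 ^ n * h₀))
            = (z T ω + (2 ^ n * h₀) • s (z T ω) T (2 ^ n * h₀) - z T1 ω)
              + (2 ^ n * h₀) • (s (z T ω + (2 ^ n * h₀) • s (z T ω) T (2 ^ n * h₀))
                T1 (2 ^ n * h₀) - s (z T1 ω) T1 (2 ^ n * h₀)) := by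
          rw [smul_sub]; abel
        rw [key]
        refine le_trans (norm_add_le _ _) ?_
        rw [norm_smul, Real.norm_eq_abs, abs_of_nonneg h'pos.le]
        have hlip := hsLip T1 mIccT1 n hn'
          (z T ω + (2 ^ n * h₀) • s (z T ω) T (2 ^ n * h₀)) (z T1 ω)
        have h2 : (2 ^ n * h₀) * ‖s (z T ω + (2 ^ n * h₀) • s (z T ω) T (2 ^ n * h₀))
              T1 (2 ^ n * h₀) - s (z T1 ω) T1 (2 ^ n * h₀)‖
            ≤ (2 ^ n * h₀) * (L * ‖z T ω + (2 ^ n * h₀) • s (z T ω) T (2 ^ n * h₀) - z T1 ω‖) :=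
          mul_le_mul_of_nonneg_left hlip h'pos.le
        nlinarith [norm_nonneg (z T ω + (2 ^ n * h₀) • s (z T ω) T (2 ^ n * h₀) - z T1 ω)]
      exact hmono.trans (mul_le_mul_of_nonneg_left bD (by positivity))
    -- combine
    have hsum : L2norm P (fun ω =>
        z T ω + (2 * (2 ^ n * h₀)) • s (z T ω) T (2 * (2 ^ n * h₀)) - z T2 ω)
        ≤ 2 * (2 ^ n * h₀) * ε_SC
          + ((1 + L * (2 ^ n * h₀)) *
              ((2 ^ n * h₀) * Real.exp (L * (2 ^ n * h₀) / 2) * (ε + n * ε_SC))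
            + (2 ^ n * h₀) * Real.exp (L * (2 ^ n * h₀) / 2) * (ε + n * ε_SC)) := by
      refine l2_tri3 (fun ω => ?_) mG1 mG2 mG3 bG1 bG2 bG3
      rw [eE1, eE2]
      abel
    refine le_trans hsum ?_
    -- final arithmetic
    set a : ℝ := 2 ^ n * h₀ with ha
    set E : ℝ := Real.exp (L * a / 2) with hE
    set B : ℝ := ε + n * ε_SC with hB'
    have hapos : 0 < a := h'pos
    have he1 : 1 + L * a / 2 ≤ E := by
      have h := Real.add_one_le_exp (L * a / 2)
      rw [hE]; linarith
    have heq : Real.exp (L * (2 * a) / 2) = E * E := by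
      rw [hE, ← Real.exp_add]
      congr 1
      ring
    have hEpos : 0 < E := Real.exp_pos _
    have hE1 : (1:ℝ) ≤ E := Real.one_le_exp (by positivity)
    have hB : 0 ≤ B := by rw [hB']; positivity
    have hBeps : ε + ((n:ℝ) + 1) * ε_SC = B + ε_SC := by rw [hB']; ring
    rw [heq]
    push_cast
    rw [hBeps]
    have hEE : (1:ℝ) ≤ E * E := by
      have := mul_le_mul hE1 hE1 zero_le_one (le_trans zero_le_one hE1)
      linarith
    have h1' : a * E * B * (1 + L * a / 2) ≤ a * E * B * E :=
      mul_le_mul_of_nonneg_left he1 (mul_nonneg (mul_nonneg hapos.le hEpos.le) hB)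
    have h2' : 2 * a * ε_SC * 1 ≤ 2 * a * ε_SC * (E * E) :=
      mul_le_mul_of_nonneg_left hEE (mul_nonneg (mul_nonneg (by norm_num) hapos.le) hεSC)
    calc 2 * a * ε_SC + ((1 + L * a) * (a * E * B) + a * E * B)
        = 2 * (a * E * B * (1 + L * a / 2)) + 2 * a * ε_SC * 1 := by ring
      _ ≤ 2 * (a * E * B * E) + 2 * a * ε_SC * (E * E) := by linarith
      _ = 2 * a * (E * E) * (B + ε_SC) := by ring
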